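/- Height-preserving invertibility of the rule ∧Lᶜ: for all finite multisets Γ, Δ, all formulas A, B, C, every * ∈ {+, −}, and every natural number n, if (Γ; Δ, A ∧ B) ⊢* C is derivable in SC2Int with height at most n, then both (Γ; Δ, A) ⊢* C and (Γ; Δ, B) ⊢* C are derivable in SC2Int with height at most n. -/
import Mathlib


/-- Polarity of the derivability relation: `pos` for verification (⊢⁺),
`neg` for falsification (⊢⁻). -/
inductive Pol : Type where
  | pos : Pol
  | neg : Pol

/-- Formulas of the bi-intuitionistic logic 2Int. -/
inductive Form : Type where
  | atom : ℕ → Form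
  | bot : Form
  | top : Form
  | conj : Form → Form → Form
  | disj : Form → Form → Form
  | imp : Form → Form → Form
  | coimp : Form → Form → Form

open Form Pol

/-- `Deriv Γ Δ s C n` means the sequent (Γ; Δ) ⊢^s C is derivable in SC2Int
with a derivation of height at most `n`. Zero-premise rules have height 0
(hence are derivable with any bound `n`), and each logical rule adds one to
the (common bound on the) heights of its premises. -/
inductive Deriv : Multiset Form → Multiset Form → Pol → Form → ℕ → Prop where
  | refPos (Γ Δ : Multiset Form) (p : ℕ) (n : ℕ) :
      Deriv (atom p ::ₘ Γ) Δ pos (atom p) n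
  | refNeg (Γ Δ : Multiset Form) (p : ℕ) (n : ℕ) :
      Deriv Γ (atom p ::ₘ Δ) neg (atom p) n
  | botLa (Γ Δ : Multiset Form) (s : Pol) (C : Form) (n : ℕ) :
      Deriv (bot ::ₘ Γ) Δ s C n
  | topLc (Γ Δ : Multiset Form) (s : Pol) (C : Form) (n : ℕ) :
      Deriv Γ (top ::ₘ Δ) s C n
  | botRneg (Γ Δ : Multiset Form) (n : ℕ) :
      Deriv Γ Δ neg bot n
  | topRpos (Γ Δ : Multiset Form) (n : ℕ) :
      Deriv Γ Δ pos top n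
  | conjRpos {Γ Δ : Multiset Form} {A B : Form} {n : ℕ} :
      Deriv Γ Δ pos A n → Deriv Γ Δ pos B n → Deriv Γ Δ pos (conj A B) (n + 1)
  | conjLa {Γ Δ : Multiset Form} {A B : Form} {s : Pol} {C : Form} {n : ℕ} :
      Deriv (A ::ₘ B ::ₘ Γ) Δ s C n → Deriv (conj A B ::ₘ Γ) Δ s C (n + 1)
  | conjRneg1 {Γ Δ : Multiset Form} {A B : Form} {n : ℕ} :
      Deriv Γ Δ neg A n → Deriv Γ Δ neg (conj A B) (n + 1)
  | conjRneg2 {Γ Δ : Multiset Form} {A B : Form} {n : ℕ} :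
      Deriv Γ Δ neg B n → Deriv Γ Δ neg (conj A B) (n + 1)
  | conjLc {Γ Δ : Multiset Form} {A B : Form} {s : Pol} {C : Form} {n : ℕ} :
      Deriv Γ (A ::ₘ Δ) s C n → Deriv Γ (B ::ₘ Δ) s C n →
      Deriv Γ (conj A B ::ₘ Δ) s C (n + 1)
  | disjRpos1 {Γ Δ : Multiset Form} {A B : Form} {n : ℕ} :
      Deriv Γ Δ pos A n → Deriv Γ Δ pos (disj A B) (n + 1)
  | disjRpos2 {Γ Δ : Multiset Form} {A B : Form} {n : ℕ} :
      Deriv Γ Δ pos B n → Deriv Γ Δ pos (disj A B) (n + 1)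
  | disjLa {Γ Δ : Multiset Form} {A B : Form} {s : Pol} {C : Form} {n : ℕ} :
      Deriv (A ::ₘ Γ) Δ s C n → Deriv (B ::ₘ Γ) Δ s C n →
      Deriv (disj A B ::ₘ Γ) Δ s C (n + 1)
  | disjRneg {Γ Δ : Multiset Form} {A B : Form} {n : ℕ} :
      Deriv Γ Δ neg A n → Deriv Γ Δ neg B n → Deriv Γ Δ neg (disj A B) (n + 1)
  | disjLc {Γ Δ : Multiset Form} {A B : Form} {s : Pol} {C : Form} {n : ℕ} :
      Deriv Γ (A ::ₘ B ::ₘ Δ) s C n → Deriv Γ (disj A B ::ₘ Δ) s C (n + 1)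
  | impRpos {Γ Δ : Multiset Form} {A B : Form} {n : ℕ} :
      Deriv (A ::ₘ Γ) Δ pos B n → Deriv Γ Δ pos (imp A B) (n + 1)
  | impLa {Γ Δ : Multiset Form} {A B : Form} {s : Pol} {C : Form} {n : ℕ} :
      Deriv (imp A B ::ₘ Γ) Δ pos A n → Deriv (B ::ₘ Γ) Δ s C n →
      Deriv (imp A B ::ₘ Γ) Δ s C (n + 1)
  | impRneg {Γ Δ : Multiset Form} {A B : Form} {n : ℕ} :
      Deriv Γ Δ pos A n → Deriv Γ Δ neg B n → Deriv Γ Δ neg (imp A B) (n + 1)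
  | impLc {Γ Δ : Multiset Form} {A B : Form} {s : Pol} {C : Form} {n : ℕ} :
      Deriv (A ::ₘ Γ) (B ::ₘ Δ) s C n → Deriv Γ (imp A B ::ₘ Δ) s C (n + 1)
  | coimpRpos {Γ Δ : Multiset Form} {A B : Form} {n : ℕ} :
      Deriv Γ Δ pos A n → Deriv Γ Δ neg B n → Deriv Γ Δ pos (coimp A B) (n + 1)
  | coimpLa {Γ Δ : Multiset Form} {A B : Form} {s : Pol} {C : Form} {n : ℕ} :
      Deriv (A ::ₘ Γ) (B ::ₘ Δ) s C n → Deriv (coimp A B ::ₘ Γ) Δ s C (n + 1)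
  | coimpRneg {Γ Δ : Multiset Form} {A B : Form} {n : ℕ} :
      Deriv Γ (B ::ₘ Δ) neg A n → Deriv Γ Δ neg (coimp A B) (n + 1)
  | coimpLc {Γ Δ : Multiset Form} {A B : Form} {s : Pol} {C : Form} {n : ℕ} :
      Deriv Γ (coimp A B ::ₘ Δ) neg B n → Deriv Γ (A ::ₘ Δ) s C n →
      Deriv Γ (coimp A B ::ₘ Δ) s C (n + 1)

/-- The sequent (Γ; Δ) ⊢^s C is derivable in SC2Int (with some height). -/
def Derivable (Γ Δ : Multiset Form) (s : Pol) (C : Form) : Prop :=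
  ∃ n : ℕ, Deriv Γ Δ s C n

lemma Deriv.succ {Γ Δ : Multiset Form} {s : Pol} {C : Form} {n : ℕ}
    (h : Deriv Γ Δ s C n) : Deriv Γ Δ s C (n + 1) := by
  induction h <;>
    first
      | (constructor <;> assumption)
      | exact Deriv.conjRneg2 (by assumption)
      | exact Deriv.disjRpos2 (by assumption)

lemma inv_aux (A B : Form) :
    ∀ {Γ Θ : Multiset Form} {s : Pol} {C : Form} {n : ℕ}, Deriv Γ Θ s C n →
    ∀ Δ, Θ = conj A B ::ₘ Δ →
      Deriv Γ (A ::ₘ Δ) s C n ∧ Deriv Γ (B ::ₘ Δ) s C n := by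
  intro Γ Θ s C n h
  induction h with
  | refPos Γ Δ' p n => intro Δ hΔ; exact ⟨.refPos .., .refPos ..⟩
  | refNeg Γ Δ' p n =>
      intro Δ hΔ
      rcases Multiset.cons_eq_cons.mp hΔ with ⟨he, rfl⟩ | ⟨hne, u, rfl, rfl⟩
      · exact absurd he (by simp)
      · constructor <;> (rw [Multiset.cons_swap]; exact .refNeg ..)
  | botLa => intro Δ hΔ; exact ⟨.botLa .., .botLa ..⟩
  | topLc Γ Δ' s C n =>
      intro Δ hΔ
      rcases Multiset.cons_eq_cons.mp hΔ with ⟨he, rfl⟩ | ⟨hne, u, rfl, rfl⟩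
      · exact absurd he (by simp)
      · constructor <;> (rw [Multiset.cons_swap]; exact .topLc ..)
  | botRneg => intro Δ hΔ; exact ⟨.botRneg .., .botRneg ..⟩
  | topRpos => intro Δ hΔ; exact ⟨.topRpos .., .topRpos ..⟩
  | conjRpos h1 h2 ih1 ih2 =>
      intro Δ hΔ; subst hΔ
      exact ⟨.conjRpos (ih1 Δ rfl).1 (ih2 Δ rfl).1, .conjRpos (ih1 Δ rfl).2 (ih2 Δ rfl).2⟩
  | conjLa h ih =>
      intro Δ hΔ; subst hΔ
      exact ⟨.conjLa (ih Δ rfl).1, .conjLa (ih Δ rfl).2⟩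
  | conjRneg1 h ih =>
      intro Δ hΔ; subst hΔ
      exact ⟨.conjRneg1 (ih Δ rfl).1, .conjRneg1 (ih Δ rfl).2⟩
  | conjRneg2 h ih =>
      intro Δ hΔ; subst hΔ
      exact ⟨.conjRneg2 (ih Δ rfl).1, .conjRneg2 (ih Δ rfl).2⟩
  | @conjLc Γ Δ' A' B' s C n h1 h2 ih1 ih2 =>
      intro Δ hΔ
      rcases Multiset.cons_eq_cons.mp hΔ with ⟨he, rfl⟩ | ⟨hne, u, rfl, rfl⟩
      · obtain ⟨rfl, rfl⟩ : A' = A ∧ B' = B := by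
          injection he with h1' h2'; exact ⟨h1', h2'⟩
        exact ⟨h1.succ, h2.succ⟩
      · have e1 : A' ::ₘ conj A B ::ₘ u = conj A B ::ₘ A' ::ₘ u := Multiset.cons_swap ..
        have e2 : B' ::ₘ conj A B ::ₘ u = conj A B ::ₘ B' ::ₘ u := Multiset.cons_swap ..
        obtain ⟨i1a, i1b⟩ := ih1 (A' ::ₘ u) e1
        obtain ⟨i2a, i2b⟩ := ih2 (B' ::ₘ u) e2
        constructor <;> rw [Multiset.cons_swap]
        · exact .conjLc (Multiset.cons_swap .. ▸ i1a) (Multiset.cons_swap .. ▸ i2a)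
        · exact .conjLc (Multiset.cons_swap .. ▸ i1b) (Multiset.cons_swap .. ▸ i2b)
  | disjRpos1 h ih =>
      intro Δ hΔ; subst hΔ
      exact ⟨.disjRpos1 (ih Δ rfl).1, .disjRpos1 (ih Δ rfl).2⟩
  | disjRpos2 h ih =>
      intro Δ hΔ; subst hΔ
      exact ⟨.disjRpos2 (ih Δ rfl).1, .disjRpos2 (ih Δ rfl).2⟩
  | disjLa h1 h2 ih1 ih2 =>
      intro Δ hΔ; subst hΔ
      exact ⟨.disjLa (ih1 Δ rfl).1 (ih2 Δ rfl).1, .disjLa (ih1 Δ rfl).2 (ih2 Δ rfl).2⟩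
  | disjRneg h1 h2 ih1 ih2 =>
      intro Δ hΔ; subst hΔ
      exact ⟨.disjRneg (ih1 Δ rfl).1 (ih2 Δ rfl).1, .disjRneg (ih1 Δ rfl).2 (ih2 Δ rfl).2⟩
  | @disjLc Γ Δ' A' B' s C n h ih =>
      intro Δ hΔ
      rcases Multiset.cons_eq_cons.mp hΔ with ⟨he, rfl⟩ | ⟨hne, u, rfl, rfl⟩
      · exact absurd he (by simp)
      · have e : A' ::ₘ B' ::ₘ conj A B ::ₘ u = conj A B ::ₘ A' ::ₘ B' ::ₘ u := by
          rw [Multiset.cons_swap B', Multiset.cons_swap A']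
        obtain ⟨ia, ib⟩ := ih (A' ::ₘ B' ::ₘ u) e
        have e2 : ∀ X : Form, X ::ₘ A' ::ₘ B' ::ₘ u = A' ::ₘ B' ::ₘ X ::ₘ u := by
          intro X; rw [Multiset.cons_swap X A', Multiset.cons_swap X B']
        constructor <;> rw [Multiset.cons_swap]
        · exact .disjLc (e2 A ▸ ia)
        · exact .disjLc (e2 B ▸ ib)
  | impRpos h ih =>
      intro Δ hΔ; subst hΔ
      exact ⟨.impRpos (ih Δ rfl).1, .impRpos (ih Δ rfl).2⟩
  | impLa h1 h2 ih1 ih2 =>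
      intro Δ hΔ; subst hΔ
      exact ⟨.impLa (ih1 Δ rfl).1 (ih2 Δ rfl).1, .impLa (ih1 Δ rfl).2 (ih2 Δ rfl).2⟩
  | impRneg h1 h2 ih1 ih2 =>
      intro Δ hΔ; subst hΔ
      exact ⟨.impRneg (ih1 Δ rfl).1 (ih2 Δ rfl).1, .impRneg (ih1 Δ rfl).2 (ih2 Δ rfl).2⟩
  | @impLc Γ Δ' A' B' s C n h ih =>
      intro Δ hΔ
      rcases Multiset.cons_eq_cons.mp hΔ with ⟨he, rfl⟩ | ⟨hne, u, rfl, rfl⟩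
      · exact absurd he (by simp)
      · have e : B' ::ₘ conj A B ::ₘ u = conj A B ::ₘ B' ::ₘ u := Multiset.cons_swap ..
        obtain ⟨ia, ib⟩ := ih (B' ::ₘ u) e
        constructor <;> rw [Multiset.cons_swap]
        · exact .impLc (Multiset.cons_swap .. ▸ ia)
        · exact .impLc (Multiset.cons_swap .. ▸ ib)
  | coimpRpos h1 h2 ih1 ih2 =>
      intro Δ hΔ; subst hΔ
      exact ⟨.coimpRpos (ih1 Δ rfl).1 (ih2 Δ rfl).1, .coimpRpos (ih1 Δ rfl).2 (ih2 Δ rfl).2⟩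
  | @coimpLa Γ Δ' A' B' s C n h ih =>
      intro Δ hΔ; subst hΔ
      have e : B' ::ₘ conj A B ::ₘ Δ = conj A B ::ₘ B' ::ₘ Δ := Multiset.cons_swap ..
      obtain ⟨ia, ib⟩ := ih (B' ::ₘ Δ) e
      exact ⟨.coimpLa (Multiset.cons_swap .. ▸ ia), .coimpLa (Multiset.cons_swap .. ▸ ib)⟩
  | @coimpRneg Γ Δ' A' B' n h ih =>
      intro Δ hΔ; subst hΔ
      have e : B' ::ₘ conj A B ::ₘ Δ = conj A B ::ₘ B' ::ₘ Δ := Multiset.cons_swap ..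
      obtain ⟨ia, ib⟩ := ih (B' ::ₘ Δ) e
      exact ⟨.coimpRneg (Multiset.cons_swap .. ▸ ia), .coimpRneg (Multiset.cons_swap .. ▸ ib)⟩
  | @coimpLc Γ Δ' A' B' s C n h1 h2 ih1 ih2 =>
      intro Δ hΔ
      rcases Multiset.cons_eq_cons.mp hΔ with ⟨he, rfl⟩ | ⟨hne, u, rfl, rfl⟩
      · exact absurd he (by simp)
      · have e1 : coimp A' B' ::ₘ conj A B ::ₘ u = conj A B ::ₘ coimp A' B' ::ₘ u :=
          Multiset.cons_swap ..
        have e2 : A' ::ₘ conj A B ::ₘ u = conj A B ::ₘ A' ::ₘ u := Multiset.cons_swap ..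
        obtain ⟨i1a, i1b⟩ := ih1 (coimp A' B' ::ₘ u) e1
        obtain ⟨i2a, i2b⟩ := ih2 (A' ::ₘ u) e2
        constructor <;> rw [Multiset.cons_swap]
        · exact .coimpLc (Multiset.cons_swap .. ▸ i1a) (Multiset.cons_swap .. ▸ i2a)
        · exact .coimpLc (Multiset.cons_swap .. ▸ i1b) (Multiset.cons_swap .. ▸ i2b)

theorem inversion_conjLc (Γ Δ : Multiset Form) (A B C : Form) (s : Pol) (n : ℕ)
    (h : Deriv Γ (Form.conj A B ::ₘ Δ) s C n) :
    Deriv Γ (A ::ₘ Δ) s C n ∧ Deriv Γ (B ::ₘ Δ) s C n :=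
  inv_aux A B h Δ rfl
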